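/- Let X : Ω → ℝⁿ and ε : Ω → ℝᵐ be square-integrable random vectors on a probability space, with X and ε independent and E[ε] = 0. Let F ∈ ℝ^{m×n}, set Y = F X + ε, Γ_X = E[X Xᵀ], Γ_Y = E[Y Yᵀ], and suppose L_Y ∈ ℝ^{m×p} has full column rank p with Γ_Y = L_Y L_Yᵀ. Let C = Γ_X Fᵀ (L_Y†)ᵀ. Then for every A ∈ ℝ^{n×m}, E‖A Y − X‖₂² = ‖A L_Y − C‖_F² − ‖C‖_F² + tr(Γ_X). -/

import Mathlib

open Matrix MeasureTheory

/-- Second (cross-)moment matrix `E[X Yᵀ]` of two random vectors. -/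
noncomputable def secondMoment {Ω : Type} [MeasurableSpace Ω] (μ : Measure Ω)
    {n m : ℕ} (X : Ω → Fin n → ℝ) (Y : Ω → Fin m → ℝ) : Matrix (Fin n) (Fin m) ℝ :=
  Matrix.of fun i j => ∫ ω, X ω i * Y ω j ∂μ

/-- Frobenius norm of a real matrix. -/
noncomputable def frob {m n : ℕ} (A : Matrix (Fin m) (Fin n) ℝ) : ℝ :=
  Real.sqrt (∑ i, ∑ j, (A i j) ^ 2)

/-- `Ad` is the Moore–Penrose pseudoinverse of `A` (the four Penrose conditions). -/
def IsMoorePenrose {m n : ℕ} (A : Matrix (Fin m) (Fin n) ℝ)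
    (Ad : Matrix (Fin n) (Fin m) ℝ) : Prop :=
  A * Ad * A = A ∧ Ad * A * Ad = Ad ∧ (A * Ad)ᵀ = A * Ad ∧ (Ad * A)ᵀ = Ad * A

/-!
Expanding the square gives `E‖AY − X‖² = tr(A Γ_Y Aᵀ − A Γ_YX − Γ_XY Aᵀ + Γ_X)`, and
independence with `E[ε] = 0` gives `Γ_XY = Γ_X Fᵀ`. The square completes as soon as
`L_Y Cᵀ = Γ_YX`, i.e. `Γ_YX` lies in the range of `L_Y`: for `Q = 1 − L_Y L_Y†` we have
`Q L_Y = 0`, so `E[(QY)(QY)ᵀ] = Q Γ_Y Qᵀ = 0`, hence `QY = 0` almost surely and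
`Q Γ_YX = E[(QY) Xᵀ] = 0`.
-/

open ProbabilityTheory

section SecondMoment

variable {Ω : Type} [MeasurableSpace Ω] {μ : Measure Ω} {a b c : ℕ}

lemma MeasureTheory.MemLp.mulVec {U : Ω → Fin a → ℝ} (hU : MemLp U 2 μ)
    (M : Matrix (Fin b) (Fin a) ℝ) : MemLp (fun ω => M *ᵥ U ω) 2 μ :=
  (LinearMap.toContinuousLinearMap M.mulVecLin).comp_memLp' hU

lemma integrable_apply_mul_apply {U : Ω → Fin a → ℝ} {V : Ω → Fin b → ℝ}
    (hU : MemLp U 2 μ) (hV : MemLp V 2 μ) (i : Fin a) (j : Fin b) :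
    Integrable (fun ω => U ω i * V ω j) μ :=
  (hU.eval i).integrable_mul (hV.eval j)

lemma secondMoment_transpose (U : Ω → Fin a → ℝ) (V : Ω → Fin b → ℝ) :
    (secondMoment μ U V)ᵀ = secondMoment μ V U := by
  ext i j
  simp [secondMoment, mul_comm]

lemma secondMoment_mulVec_left {U : Ω → Fin a → ℝ} {V : Ω → Fin b → ℝ}
    (hU : MemLp U 2 μ) (hV : MemLp V 2 μ) (M : Matrix (Fin c) (Fin a) ℝ) :
    secondMoment μ (fun ω => M *ᵥ U ω) V = M * secondMoment μ U V := by
  ext i j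
  simp only [secondMoment, mul_apply, of_apply, mulVec, dotProduct, Finset.sum_mul, mul_assoc]
  rw [integral_finsetSum _ fun k _ => (integrable_apply_mul_apply hU hV k j).const_mul _]
  simp only [integral_const_mul]

lemma secondMoment_mulVec_right {U : Ω → Fin a → ℝ} {V : Ω → Fin b → ℝ}
    (hU : MemLp U 2 μ) (hV : MemLp V 2 μ) (M : Matrix (Fin c) (Fin b) ℝ) :
    secondMoment μ U (fun ω => M *ᵥ V ω) = secondMoment μ U V * Mᵀ := by
  rw [← secondMoment_transpose, secondMoment_mulVec_left hV hU, transpose_mul,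
    secondMoment_transpose]

lemma secondMoment_add_right {U : Ω → Fin a → ℝ} {V W : Ω → Fin b → ℝ}
    (hU : MemLp U 2 μ) (hV : MemLp V 2 μ) (hW : MemLp W 2 μ) :
    secondMoment μ U (fun ω => V ω + W ω) = secondMoment μ U V + secondMoment μ U W := by
  ext i j
  simp only [secondMoment, of_apply, Matrix.add_apply, Pi.add_apply, mul_add]
  exact integral_add (integrable_apply_mul_apply hU hV i j)
    (integrable_apply_mul_apply hU hW i j)

lemma secondMoment_sub_left {U V : Ω → Fin a → ℝ} {W : Ω → Fin b → ℝ}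
    (hU : MemLp U 2 μ) (hV : MemLp V 2 μ) (hW : MemLp W 2 μ) :
    secondMoment μ (fun ω => U ω - V ω) W = secondMoment μ U W - secondMoment μ V W := by
  ext i j
  simp only [secondMoment, of_apply, Matrix.sub_apply, Pi.sub_apply, sub_mul]
  exact integral_sub (integrable_apply_mul_apply hU hW i j)
    (integrable_apply_mul_apply hV hW i j)

lemma secondMoment_sub_right {U : Ω → Fin a → ℝ} {V W : Ω → Fin b → ℝ}
    (hU : MemLp U 2 μ) (hV : MemLp V 2 μ) (hW : MemLp W 2 μ) :
    secondMoment μ U (fun ω => V ω - W ω) = secondMoment μ U V - secondMoment μ U W := by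
  rw [← secondMoment_transpose, secondMoment_sub_left hV hW hU, transpose_sub,
    secondMoment_transpose, secondMoment_transpose]

lemma secondMoment_eq_zero_of_indepFun {U : Ω → Fin a → ℝ} {V : Ω → Fin b → ℝ}
    (hU : AEStronglyMeasurable U μ) (hV : Integrable V μ) (hUV : IndepFun U V μ)
    (hV0 : ∫ ω, V ω ∂μ = 0) :
    secondMoment μ U V = 0 := by
  ext i j
  have hVj : ∫ ω, V ω j ∂μ = 0 := by
    rw [← eval_integral hV.eval, hV0, Pi.zero_apply]
  have hUVij : IndepFun (fun ω => U ω i) (fun ω => V ω j) μ :=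
    hUV.comp (measurable_pi_apply i) (measurable_pi_apply j)
  simp only [secondMoment, of_apply, Matrix.zero_apply]
  rw [hUVij.integral_fun_mul_eq_mul_integral
    ((continuous_apply i).comp_aestronglyMeasurable hU)
    (hV.eval j).aestronglyMeasurable, hVj, mul_zero]

lemma secondMoment_eq_zero_of_secondMoment_self_eq_zero {U : Ω → Fin a → ℝ}
    {V : Ω → Fin b → ℝ} (hU : MemLp U 2 μ) (hUU : secondMoment μ U U = 0) :
    secondMoment μ U V = 0 := by
  ext i j
  have hsq : (fun ω => U ω i * U ω i) =ᵐ[μ] 0 :=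
    (integral_eq_zero_iff_of_nonneg (fun ω => mul_self_nonneg _)
      (integrable_apply_mul_apply hU hU i i)).1 (congrFun (congrFun hUU i) i)
  refine integral_eq_zero_of_ae ?_
  filter_upwards [hsq] with ω hω
  simp [mul_self_eq_zero.1 hω]

lemma integral_sum_sq_eq_trace_secondMoment {U : Ω → Fin a → ℝ} (hU : MemLp U 2 μ) :
    ∫ ω, ∑ i, U ω i ^ 2 ∂μ = trace (secondMoment μ U U) := by
  rw [integral_finsetSum _ fun i _ => by
    simpa only [sq] using integrable_apply_mul_apply hU hU i i]
  simp only [trace, diag, secondMoment, of_apply, sq]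

lemma secondMoment_mulVec_sub_self {X : Ω → Fin a → ℝ} {Y : Ω → Fin b → ℝ}
    (hX : MemLp X 2 μ) (hY : MemLp Y 2 μ) (A : Matrix (Fin a) (Fin b) ℝ) :
    secondMoment μ (fun ω => A *ᵥ Y ω - X ω) (fun ω => A *ᵥ Y ω - X ω)
      = A * secondMoment μ Y Y * Aᵀ - A * (secondMoment μ X Y)ᵀ
        - secondMoment μ X Y * Aᵀ + secondMoment μ X X := by
  have hAY := hY.mulVec A
  have hR : MemLp (fun ω => A *ᵥ Y ω - X ω) 2 μ := hAY.sub hX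
  rw [secondMoment_sub_left hAY hX hR, secondMoment_sub_right hAY hAY hX,
    secondMoment_sub_right hX hAY hX, secondMoment_mulVec_left hY hAY,
    secondMoment_mulVec_right hY hY, secondMoment_mulVec_left hY hX,
    secondMoment_mulVec_right hX hY, secondMoment_transpose, Matrix.mul_assoc]
  abel

lemma mul_mul_secondMoment_eq_self_of_secondMoment_self_eq {X : Ω → Fin a → ℝ}
    {Y : Ω → Fin b → ℝ} (hX : MemLp X 2 μ) (hY : MemLp Y 2 μ) {L : Matrix (Fin b) (Fin c) ℝ}
    (hL : secondMoment μ Y Y = L * Lᵀ) {Ld : Matrix (Fin c) (Fin b) ℝ} (hLd : L * Ld * L = L) :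
    L * Ld * secondMoment μ Y X = secondMoment μ Y X := by
  obtain ⟨Q, hQ⟩ : ∃ Q, Q = 1 - L * Ld := ⟨_, rfl⟩
  have hQL : Q * L = 0 := by rw [hQ, Matrix.sub_mul, Matrix.one_mul, hLd, sub_self]
  have hQY : secondMoment μ (fun ω => Q *ᵥ Y ω) (fun ω => Q *ᵥ Y ω) = 0 := by
    rw [secondMoment_mulVec_left hY (hY.mulVec Q), secondMoment_mulVec_right hY hY, hL,
      Matrix.mul_assoc L, ← Matrix.mul_assoc Q L, hQL, Matrix.zero_mul]
  have hQYX := secondMoment_eq_zero_of_secondMoment_self_eq_zero (V := X) (hY.mulVec Q) hQY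
  rw [secondMoment_mulVec_left hY hX, hQ, Matrix.sub_mul, Matrix.one_mul, sub_eq_zero] at hQYX
  exact hQYX.symm

end SecondMoment

lemma frob_sq_eq_trace {a b : ℕ} (M : Matrix (Fin a) (Fin b) ℝ) :
    frob M ^ 2 = trace (M * Mᵀ) := by
  rw [frob, Real.sq_sqrt (by positivity)]
  simp [trace, mul_apply, sq]

lemma frob_sq_sub_frob_sq_eq_trace {a b c : ℕ} (A : Matrix (Fin a) (Fin b) ℝ)
    {L : Matrix (Fin b) (Fin c) ℝ} {Ld : Matrix (Fin c) (Fin b) ℝ} {B : Matrix (Fin a) (Fin b) ℝ}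
    (hB : L * Ld * Bᵀ = Bᵀ) :
    frob (A * L - B * Ldᵀ) ^ 2 - frob (B * Ldᵀ) ^ 2
      = trace (A * (L * Lᵀ) * Aᵀ - A * Bᵀ - B * Aᵀ) := by
  have hLC : L * (B * Ldᵀ)ᵀ = Bᵀ := by
    rw [transpose_mul, transpose_transpose, ← Matrix.mul_assoc, hB]
  have hCL : B * Ldᵀ * Lᵀ = B := by
    rw [← transpose_transpose (B * Ldᵀ * Lᵀ), transpose_mul, transpose_transpose, hLC,
      transpose_transpose]
  have hexp : (A * L - B * Ldᵀ) * (A * L - B * Ldᵀ)ᵀ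
      = A * (L * Lᵀ) * Aᵀ - A * Bᵀ - B * Aᵀ + B * Ldᵀ * (B * Ldᵀ)ᵀ :=
    calc _ = A * (L * Lᵀ) * Aᵀ - A * (L * (B * Ldᵀ)ᵀ) - B * Ldᵀ * Lᵀ * Aᵀ
          + B * Ldᵀ * (B * Ldᵀ)ᵀ := by
          simp only [transpose_sub, transpose_mul A L, Matrix.sub_mul, Matrix.mul_sub,
            Matrix.mul_assoc]
          abel
      _ = _ := by rw [hLC, hCL]
  rw [frob_sq_eq_trace, frob_sq_eq_trace, hexp, trace_add, add_sub_cancel_right]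

theorem inverse_risk_completed_square_general {Ω : Type} [MeasurableSpace Ω]
    (μ : Measure Ω) [IsProbabilityMeasure μ] {n m p : ℕ}
    (X : Ω → Fin n → ℝ) (ε : Ω → Fin m → ℝ)
    (hX : MemLp X 2 μ) (hε : MemLp ε 2 μ)
    (hindep : ProbabilityTheory.IndepFun X ε μ)
    (hmean : (∫ ω, ε ω ∂μ) = 0)
    (F : Matrix (Fin m) (Fin n) ℝ)
    (LY : Matrix (Fin m) (Fin p) ℝ)
    (hLY : secondMoment μ (fun ω => F *ᵥ X ω + ε ω) (fun ω => F *ᵥ X ω + ε ω)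
        = LY * LYᵀ)
    (LYd : Matrix (Fin p) (Fin m) ℝ) (hLYd : IsMoorePenrose LY LYd)
    (A : Matrix (Fin n) (Fin m) ℝ) :
    ∫ ω, ∑ i, (A *ᵥ (F *ᵥ X ω + ε ω) - X ω) i ^ 2 ∂μ
      = frob (A * LY - secondMoment μ X X * Fᵀ * LYdᵀ) ^ 2
          - frob (secondMoment μ X X * Fᵀ * LYdᵀ) ^ 2
          + Matrix.trace (secondMoment μ X X) := by
  have hY : MemLp (fun ω => F *ᵥ X ω + ε ω) 2 μ := (hX.mulVec F).add hε
  have hXY : secondMoment μ X (fun ω => F *ᵥ X ω + ε ω) = secondMoment μ X X * Fᵀ := by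
    rw [secondMoment_add_right hX (hX.mulVec F) hε, secondMoment_mulVec_right hX hX,
      secondMoment_eq_zero_of_indepFun hX.aestronglyMeasurable (hε.integrable one_le_two)
        hindep hmean, add_zero]
  have hrange := mul_mul_secondMoment_eq_self_of_secondMoment_self_eq hX hY hLY hLYd.1
  rw [← secondMoment_transpose, hXY] at hrange
  have hR : MemLp (fun ω => A *ᵥ (F *ᵥ X ω + ε ω) - X ω) 2 μ := (hY.mulVec A).sub hX
  rw [integral_sum_sq_eq_trace_secondMoment hR,
    secondMoment_mulVec_sub_self hX hY, hLY, hXY, frob_sq_sub_frob_sq_eq_trace A hrange,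
    trace_add]

/-- Completed-square expansion for the inverse problem: with `Y = F X + ε`,
`Γ_Y = L_Y L_Yᵀ` (`L_Y` of full column rank) and `C = Γ_X Fᵀ (L_Y†)ᵀ`,
`E‖A Y − X‖₂² = ‖A L_Y − C‖_F² − ‖C‖_F² + tr(Γ_X)` for every `A`. -/
theorem inverse_risk_completed_square {Ω : Type} [MeasurableSpace Ω]
    (μ : Measure Ω) [IsProbabilityMeasure μ] {n m p : ℕ}
    (X : Ω → Fin n → ℝ) (ε : Ω → Fin m → ℝ)
    (hX : MemLp X 2 μ) (hε : MemLp ε 2 μ)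
    (hindep : ProbabilityTheory.IndepFun X ε μ)
    (hmean : (∫ ω, ε ω ∂μ) = 0)
    (F : Matrix (Fin m) (Fin n) ℝ)
    (LY : Matrix (Fin m) (Fin p) ℝ) (hLYrank : LY.rank = p)
    (hLY : secondMoment μ (fun ω => F *ᵥ X ω + ε ω) (fun ω => F *ᵥ X ω + ε ω)
        = LY * LYᵀ)
    (LYd : Matrix (Fin p) (Fin m) ℝ) (hLYd : IsMoorePenrose LY LYd)
    (A : Matrix (Fin n) (Fin m) ℝ) :
    ∫ ω, ∑ i, (A *ᵥ (F *ᵥ X ω + ε ω) - X ω) i ^ 2 ∂μ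
      = frob (A * LY - secondMoment μ X X * Fᵀ * LYdᵀ) ^ 2
          - frob (secondMoment μ X X * Fᵀ * LYdᵀ) ^ 2
          + Matrix.trace (secondMoment μ X X) :=
  inverse_risk_completed_square_general μ X ε hX hε hindep hmean F LY hLY LYd hLYd A
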